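/- arXiv:1804.08008 — 3 statements merged into one kernel-verified Lean document; each statement's English description precedes it below -/
import Mathlib

section
/- For points p₁, q₁, p₂, q₂ in ℝ^d, define paths P_i(t) = ((p_i+q_i)/2 + cos(πt)·(p_i−q_i)/2, sin(πt)·(p_i−q_i)/2) in ℝ^{2d} for i = 1,2. Then the squared distance ‖P₁(t) − P₂(t)‖² equals a·cos(πt) + b for constants a, b depending only on p₁, p₂, q₁, q₂; in particular t ↦ ‖P₁(t) − P₂(t)‖ is monotone on [0,1]. -/
/-! `bcPath` is linear in `(p, q)`, so the difference of two paths is the path of the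
differences, and it suffices to compute `‖bcPath p q t‖²`. With `m = (p + q)/2` and
`w = (p - q)/2` this is `‖m + cos(πt) w‖² + sin²(πt) ‖w‖² = ‖m‖² + ‖w‖² + 2 cos(πt) ⟪m, w⟫`,
and by the parallelogram law `‖m‖² + ‖w‖² = (‖p‖² + ‖q‖²)/2`, `2 ⟪m, w⟫ = (‖p‖² - ‖q‖²)/2`.
Being affine in the monotone function `cos(πt)`, the squared distance is monotone on `[0, 1]`. -/

open Real

noncomputable def bcPath {d : ℕ} (p q : EuclideanSpace ℝ (Fin d)) (t : ℝ) :
    EuclideanSpace ℝ (Fin d ⊕ Fin d) :=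
  WithLp.toLp 2 (Sum.elim ((1/2 : ℝ) • (p + q) + (Real.cos (Real.pi * t) / 2) • (p - q))
           ((Real.sin (Real.pi * t) / 2) • (p - q)))

theorem EuclideanSpace.norm_sq_toLp_sumElim {ι κ : Type*} [Fintype ι] [Fintype κ]
    (x : ι → ℝ) (y : κ → ℝ) :
    ‖WithLp.toLp 2 (Sum.elim x y)‖ ^ 2 = ‖WithLp.toLp 2 x‖ ^ 2 + ‖WithLp.toLp 2 y‖ ^ 2 := by
  simp only [EuclideanSpace.norm_sq_eq, Fintype.sum_sum_type, Sum.elim_inl, Sum.elim_inr]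

theorem bcPath_sub_bcPath {d : ℕ} (p₁ q₁ p₂ q₂ : EuclideanSpace ℝ (Fin d)) (t : ℝ) :
    bcPath p₁ q₁ t - bcPath p₂ q₂ t = bcPath (p₁ - p₂) (q₁ - q₂) t := by
  ext (i | i) <;>
    simp only [bcPath, PiLp.sub_apply, PiLp.toLp_apply, Sum.elim_inl, Sum.elim_inr,
      WithLp.ofLp_sub, Pi.add_apply, Pi.sub_apply, Pi.smul_apply, smul_eq_mul] <;>
    ring

theorem norm_bcPath_sq {d : ℕ} (p q : EuclideanSpace ℝ (Fin d)) (t : ℝ) :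
    ‖bcPath p q t‖ ^ 2 =
      (‖p‖ ^ 2 - ‖q‖ ^ 2) / 2 * cos (π * t) + (‖p‖ ^ 2 + ‖q‖ ^ 2) / 2 := by
  simp only [bcPath, EuclideanSpace.norm_sq_toLp_sumElim, WithLp.toLp_add, WithLp.toLp_smul,
    WithLp.toLp_sub, WithLp.toLp_ofLp]
  have inner_add_sub : inner ℝ (p + q) (p - q) = ‖p‖ ^ 2 - ‖q‖ ^ 2 := by
    rw [inner_add_left, inner_sub_right, inner_sub_right, real_inner_self_eq_norm_sq,
      real_inner_self_eq_norm_sq, real_inner_comm]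
    ring
  rw [norm_add_sq_real, inner_smul_left, inner_smul_right, inner_add_sub, norm_smul, norm_smul,
    norm_smul]
  have parallelogram := parallelogram_law_with_norm ℝ p q
  have pythagoras := sin_sq_add_cos_sq (π * t)
  simp only [mul_pow, Real.norm_eq_abs, sq_abs, RCLike.conj_to_real]
  linear_combination (1 / 4) * parallelogram + (‖p - q‖ ^ 2 / 4) * pythagoras

theorem antitoneOn_cos_pi_mul : AntitoneOn (fun t => cos (π * t)) (Set.Icc 0 1) :=
  antitoneOn_cos.comp_MonotoneOn (fun _ _ _ _ h => mul_le_mul_of_nonneg_left h pi_pos.le)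
    fun _ ht => ⟨mul_nonneg pi_pos.le ht.1, mul_le_of_le_one_right pi_pos.le ht.2⟩

theorem monotoneOn_or_antitoneOn_of_sq_eq {α : Type*} [Preorder α] {f g : α → ℝ} {s : Set α}
    {a b : ℝ} (hf : ∀ x, 0 ≤ f x) (hfg : ∀ x, f x ^ 2 = a * g x + b) (hg : AntitoneOn g s) :
    MonotoneOn f s ∨ AntitoneOn f s := by
  rcases le_total a 0 with ha | ha
  · left
    intro x hx y hy hxy
    refine (pow_le_pow_iff_left₀ (hf x) (hf y) two_ne_zero).mp ?_
    rw [hfg, hfg]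
    nlinarith [hg hx hy hxy]
  · right
    intro x hx y hy hxy
    refine (pow_le_pow_iff_left₀ (hf y) (hf x) two_ne_zero).mp ?_
    rw [hfg, hfg]
    nlinarith [hg hx hy hxy]

theorem bcPath_sq_dist_affine_in_cos {d : ℕ} (p₁ q₁ p₂ q₂ : EuclideanSpace ℝ (Fin d)) :
    ∃ a b : ℝ,
      (∀ t : ℝ, ‖bcPath p₁ q₁ t - bcPath p₂ q₂ t‖ ^ 2 = a * Real.cos (Real.pi * t) + b) ∧
      (MonotoneOn (fun t => ‖bcPath p₁ q₁ t - bcPath p₂ q₂ t‖) (Set.Icc (0:ℝ) 1) ∨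
       AntitoneOn (fun t => ‖bcPath p₁ q₁ t - bcPath p₂ q₂ t‖) (Set.Icc (0:ℝ) 1)) := by
  have sq_dist : ∀ t : ℝ, ‖bcPath p₁ q₁ t - bcPath p₂ q₂ t‖ ^ 2 =
      (‖p₁ - p₂‖ ^ 2 - ‖q₁ - q₂‖ ^ 2) / 2 * cos (π * t) + (‖p₁ - p₂‖ ^ 2 + ‖q₁ - q₂‖ ^ 2) / 2 :=
    fun t => by rw [bcPath_sub_bcPath, norm_bcPath_sq]
  exact ⟨_, _, sq_dist,
    monotoneOn_or_antitoneOn_of_sq_eq (fun _ => norm_nonneg _) sq_dist antitoneOn_cos_pi_mul⟩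
end

section
/- For points p₁, q₁, p₂, q₂ in ℝ^d with ‖p₁−p₂‖ = ‖q₁−q₂‖, the Bezdek–Connelly paths P₁(t), P₂(t) in ℝ^{2d} satisfy ‖P₁(t) − P₂(t)‖ = ‖p₁ − p₂‖ for all t ∈ [0,1]. -/
/-!
The difference of two Bezdek–Connelly paths is the path of the differences `a = p₁ - p₂`,
`b = q₁ - q₂`. That path is `(a + b)/2` plus the vector `(a - b)/2` rotated through the angle
`πt` into the extra `d` coordinates. When `‖a‖ = ‖b‖` the vectors `(a + b)/2` and `(a - b)/2`
are orthogonal, so the rotation does not change the norm, which stays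
`√(‖(a + b)/2‖² + ‖(a - b)/2‖²) = ‖a‖` by the parallelogram law.
-/

open Real

theorem EuclideanSpace.norm_sq_toLp_sum_elim {𝕜 ι κ : Type*} [RCLike 𝕜] [Fintype ι] [Fintype κ]
    (u : EuclideanSpace 𝕜 ι) (v : EuclideanSpace 𝕜 κ) :
    ‖WithLp.toLp 2 (Sum.elim (WithLp.ofLp u) (WithLp.ofLp v))‖ ^ 2 = ‖u‖ ^ 2 + ‖v‖ ^ 2 := by
  simp only [EuclideanSpace.norm_sq_eq, Fintype.sum_sum_type, Sum.elim_inl, Sum.elim_inr]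

theorem bcPath_eq_toLp_sum_elim {d : ℕ} (p q : EuclideanSpace ℝ (Fin d)) (t : ℝ) :
    bcPath p q t = WithLp.toLp 2 (Sum.elim
      (WithLp.ofLp ((1/2 : ℝ) • (p + q) + (cos (π * t) / 2) • (p - q)))
      (WithLp.ofLp ((sin (π * t) / 2) • (p - q)))) := rfl

theorem norm_add_smul_sq_add_norm_smul_sq_of_inner_eq_zero {E : Type*} [NormedAddCommGroup E]
    [InnerProductSpace ℝ E] {x y : E} (hxy : inner ℝ x y = 0) {c s : ℝ} (hcs : s ^ 2 + c ^ 2 = 1) :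
    ‖x + c • y‖ ^ 2 + ‖s • y‖ ^ 2 = ‖x‖ ^ 2 + ‖y‖ ^ 2 := by
  rw [norm_add_sq_real, real_inner_smul_right, hxy, norm_smul, norm_smul, mul_pow, mul_pow,
    Real.norm_eq_abs, Real.norm_eq_abs, sq_abs, sq_abs]
  linear_combination ‖y‖ ^ 2 * hcs

theorem norm_bcPath_of_norm_eq {d : ℕ} {p q : EuclideanSpace ℝ (Fin d)} (h : ‖p‖ = ‖q‖) (t : ℝ) :
    ‖bcPath p q t‖ = ‖p‖ := by
  set x : EuclideanSpace ℝ (Fin d) := (1/2 : ℝ) • (p + q)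
  set y : EuclideanSpace ℝ (Fin d) := (1/2 : ℝ) • (p - q)
  have hxy : inner ℝ x y = 0 := by
    rw [real_inner_smul_left, real_inner_smul_right, (real_inner_add_sub_eq_zero_iff p q).2 h,
      mul_zero, mul_zero]
  have hsmul (r : ℝ) : (r / 2) • (p - q) = r • y := by module
  have hxy_sq : ‖x‖ ^ 2 + ‖y‖ ^ 2 = ‖p‖ ^ 2 := by
    have half : ‖(1/2 : ℝ)‖ = 1/2 := by norm_num
    simp only [x, y, norm_smul, mul_pow, half]
    linear_combination (1/4 : ℝ) * parallelogram_law_with_norm ℝ p q - (‖p‖ + ‖q‖) / 2 * h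
  refine (sq_eq_sq₀ (norm_nonneg _) (norm_nonneg _)).1 ?_
  rw [bcPath_eq_toLp_sum_elim, EuclideanSpace.norm_sq_toLp_sum_elim, hsmul, hsmul,
    norm_add_smul_sq_add_norm_smul_sq_of_inner_eq_zero hxy (sin_sq_add_cos_sq _), hxy_sq]

theorem bcPath_dist_const {d : ℕ} (p₁ q₁ p₂ q₂ : EuclideanSpace ℝ (Fin d))
    (h : ‖p₁ - p₂‖ = ‖q₁ - q₂‖) :
    ∀ t ∈ Set.Icc (0:ℝ) 1, ‖bcPath p₁ q₁ t - bcPath p₂ q₂ t‖ = ‖p₁ - p₂‖ := fun t _ => by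
  rw [bcPath_sub_bcPath, norm_bcPath_of_norm_eq h]
end

section
/- Let V be a finite set, E ⊆ V × V, and p, q : V → ℝ^d with ‖p u − p v‖ = ‖q u − q v‖ for all (u,v) ∈ E. Define the Bezdek–Connelly paths P_v(t) ∈ ℝ^{2d} for v ∈ V. Then for every (u,v) ∈ E and every t ∈ [0,1], ‖P_u(t) − P_v(t)‖ = ‖p u − p v‖; i.e., the continuous motion t ↦ (P_v(t))_{v∈V} preserves all edge lengths of the framework. -/
open Real

/-!
For fixed `t`, `bcPath p q t` is linear in `(p, q)`, so the difference of two paths is the path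
of the differences `A = p u - p v`, `B = q u - q v`. When `‖A‖ = ‖B‖`, the vectors
`A + B` and `A - B` are orthogonal, and the squared norm of the path is
`(‖A + B‖² + (cos² + sin²) ‖A - B‖²) / 4 = (‖A‖² + ‖B‖²) / 2 = ‖A‖²` by the parallelogram law.
-/

theorem EuclideanSpace.norm_toLp_sumElim_sq {𝕜 ι κ : Type*} [RCLike 𝕜] [Fintype ι] [Fintype κ]
    (x : EuclideanSpace 𝕜 ι) (y : EuclideanSpace 𝕜 κ) :
    ‖(WithLp.toLp 2 (Sum.elim x y) : EuclideanSpace 𝕜 (ι ⊕ κ))‖ ^ 2 = ‖x‖ ^ 2 + ‖y‖ ^ 2 := by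
  rw [EuclideanSpace.norm_sq_eq, EuclideanSpace.norm_sq_eq, EuclideanSpace.norm_sq_eq,
    Fintype.sum_sum_type]
  rfl

theorem bcPath_sub {d : ℕ} (p q p' q' : EuclideanSpace ℝ (Fin d)) (t : ℝ) :
    bcPath p q t - bcPath p' q' t = bcPath (p - p') (q - q') t := by
  simp only [bcPath, WithLp.ofLp_sub, ← WithLp.toLp_sub, ← Sum.elim_sub_sub]
  congr 2 <;> module

theorem sq_norm_bcPath {d : ℕ} (p q : EuclideanSpace ℝ (Fin d)) (t : ℝ) :
    ‖bcPath p q t‖ ^ 2 = ‖(1/2 : ℝ) • (p + q) + (cos (π * t) / 2) • (p - q)‖ ^ 2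
      + ‖(sin (π * t) / 2) • (p - q)‖ ^ 2 :=
  EuclideanSpace.norm_toLp_sumElim_sq _ _

theorem bcPath_preserves_edge_lengths_general {d : ℕ} {V : Type*}
    (E : Set (V × V)) (p q : V → EuclideanSpace ℝ (Fin d))
    (h : ∀ e ∈ E, ‖p e.1 - p e.2‖ = ‖q e.1 - q e.2‖) :
    ∀ e ∈ E, ∀ t ∈ Set.Icc (0:ℝ) 1,
      ‖bcPath (p e.1) (q e.1) t - bcPath (p e.2) (q e.2) t‖ = ‖p e.1 - p e.2‖ := by
  intro e he t _
  rw [bcPath_sub]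
  exact norm_bcPath_of_norm_eq (h e he) t

theorem bcPath_preserves_edge_lengths {d : ℕ} {V : Type*} [Finite V]
    (E : Set (V × V)) (p q : V → EuclideanSpace ℝ (Fin d))
    (h : ∀ e ∈ E, ‖p e.1 - p e.2‖ = ‖q e.1 - q e.2‖) :
    ∀ e ∈ E, ∀ t ∈ Set.Icc (0:ℝ) 1,
      ‖bcPath (p e.1) (q e.1) t - bcPath (p e.2) (q e.2) t‖ = ‖p e.1 - p e.2‖ :=
  bcPath_preserves_edge_lengths_general E p q h
end
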